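/- arXiv:2511.03040 — 2 statements merged into one kernel-verified Lean document; each statement's English description precedes it below -/
import Mathlib

section
/- PG(3,2) has exactly 56 spreads, where a spread is a partition of the 15 points into 5 lines. -/
/-- A line of PG(3,2): the set {u, v, u+v} for distinct nonzero vectors u, v of F_2^4. -/
def PGLine (L : Finset (Fin 4 → ZMod 2)) : Prop :=
  ∃ u v : Fin 4 → ZMod 2, u ≠ 0 ∧ v ≠ 0 ∧ u ≠ v ∧ L = {u, v, u + v}

/-- A spread: 5 pairwise disjoint lines covering all 15 nonzero vectors. -/
def IsSpread (S : Finset (Finset (Fin 4 → ZMod 2))) : Prop :=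
  S.card = 5 ∧ (∀ L ∈ S, PGLine L) ∧
    (∀ L ∈ S, ∀ L' ∈ S, L ≠ L' → Disjoint L L') ∧
    ∀ x : Fin 4 → ZMod 2, x ≠ 0 → ∃ L ∈ S, x ∈ L

/-!
A spread is an exact cover of the 15 points by lines. Exact covers of a finite linearly ordered
set `U` can be enumerated by choosing the block through the least point of `U` and recursively
covering the rest; this makes the covers with `n` blocks an explicitly computed finset. Reading
the vectors of `F_2^4` as binary numbers turns vector addition into `xor` on `Fin 16`, where the
exact covers of the nonzero points by 5 lines are then counted by evaluation in the kernel.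
-/

open Finset

theorem Finset.sup_id_erase_of_pairwiseDisjoint {α : Type*} [DecidableEq α] {T : Finset (Finset α)}
    (hT : (T : Set (Finset α)).PairwiseDisjoint id) {L : Finset α} (hL : L ∈ T) :
    (T.erase L).sup id = T.sup id \ L := by
  have hdisj : Disjoint ((T.erase L).sup id) L :=
    Finset.disjoint_sup_left.2 fun M hM => hT (mem_of_mem_erase hM) hL (ne_of_mem_erase hM)
  conv_rhs => rw [← insert_erase hL, sup_insert, id, sup_sdiff_left_self,
    sdiff_eq_self_of_disjoint hdisj]

section ExactCovers

variable {α : Type*} [LinearOrder α]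

def exactCovers (𝓛 : Finset (Finset α)) : ℕ → Finset α → Finset (Finset (Finset α))
  | 0, U => if U = ∅ then {∅} else ∅
  | n + 1, U => if h : U.Nonempty then
      (𝓛.filter fun L => U.min' h ∈ L ∧ L ⊆ U).biUnion fun L =>
        (exactCovers 𝓛 n (U \ L)).image (insert L)
    else ∅

theorem mem_exactCovers {𝓛 : Finset (Finset α)} (h𝓛 : ∅ ∉ 𝓛) {n : ℕ} {U : Finset α}
    {T : Finset (Finset α)} :
    T ∈ exactCovers 𝓛 n U ↔
      T.card = n ∧ T ⊆ 𝓛 ∧ (T : Set (Finset α)).PairwiseDisjoint id ∧ T.sup id = U := by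
  induction n generalizing U T with
  | zero =>
    rw [card_eq_zero]
    constructor
    · intro hT
      unfold exactCovers at hT
      split_ifs at hT with hU <;> simp_all
    · rintro ⟨rfl, -, -, rfl⟩
      simp [exactCovers]
  | succ n ih =>
    rw [exactCovers]
    split_ifs with hU
    · simp only [mem_biUnion, mem_filter, mem_image, ih]
      constructor
      · rintro ⟨L, ⟨hL𝓛, -, hLU⟩, T, ⟨hcard, hsub, hdisj, hsup⟩, rfl⟩
        have hL : L.Nonempty := nonempty_iff_ne_empty.2 (ne_of_mem_of_not_mem hL𝓛 h𝓛)
        have hLT : ∀ M ∈ T, Disjoint L M :=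
          Finset.disjoint_sup_right.1 (hsup ▸ disjoint_sdiff)
        have hLnT : L ∉ T := fun h => hL.ne_empty (disjoint_self.1 (hLT L h))
        refine ⟨by rw [card_insert_of_notMem hLnT, hcard], insert_subset hL𝓛 hsub, ?_, ?_⟩
        · rw [coe_insert]
          exact hdisj.insert fun M hM _ => hLT M hM
        · rw [sup_insert, hsup, id, sup_sdiff_cancel_right hLU]
      · rintro ⟨hcard, hsub, hdisj, rfl⟩
        obtain ⟨L, hLT, hpL⟩ := mem_sup.1 (min'_mem _ hU)
        exact ⟨L, ⟨hsub hLT, hpL, le_sup (f := id) hLT⟩, T.erase L,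
          ⟨by rw [card_erase_of_mem hLT, hcard, Nat.add_sub_cancel], (erase_subset _ _).trans hsub,
            hdisj.subset (coe_subset.2 (erase_subset _ _)),
            sup_id_erase_of_pairwiseDisjoint hdisj hLT⟩, insert_erase hLT⟩
    · simp only [notMem_empty, false_iff]
      rintro ⟨hcard, hsub, -, rfl⟩
      obtain ⟨L, hLT⟩ := (card_pos (s := T)).1 (by omega)
      have hL : L.Nonempty := nonempty_iff_ne_empty.2 (ne_of_mem_of_not_mem (hsub hLT) h𝓛)
      exact hU (hL.mono (le_sup (f := id) hLT))

end ExactCovers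

/-- `ZMod 2` is definitionally `Fin 2`, so this is Mathlib's base-2 digit encoding. -/
def toFin16 : (Fin 4 → ZMod 2) ≃ Fin 16 := finFunctionFinEquiv

theorem toFin16_add (u v : Fin 4 → ZMod 2) : toFin16 (u + v) = toFin16 u ^^^ toFin16 v := by
  revert u v
  decide

theorem toFin16_eq_zero {u : Fin 4 → ZMod 2} : toFin16 u = 0 ↔ u = 0 := by
  rw [← toFin16.apply_eq_iff_eq, show toFin16 0 = 0 by decide]

def xorLines : Finset (Finset (Fin 16)) :=
  ((univ ×ˢ univ).filter fun p : Fin 16 × Fin 16 => p.1 ≠ 0 ∧ p.2 ≠ 0 ∧ p.1 ≠ p.2).image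
    fun p => {p.1, p.2, p.1 ^^^ p.2}

theorem mem_xorLines {M : Finset (Fin 16)} :
    M ∈ xorLines ↔ ∃ a b : Fin 16, a ≠ 0 ∧ b ≠ 0 ∧ a ≠ b ∧ {a, b, a ^^^ b} = M := by
  simp [xorLines, and_assoc]

theorem empty_notMem_xorLines : ∅ ∉ xorLines := by
  simp [mem_xorLines]

theorem fin16_eq_of_xor_eq_zero : ∀ a b : Fin 16, a ^^^ b = 0 → a = b := by
  decide

theorem zero_notMem_of_mem_xorLines {M : Finset (Fin 16)} (hM : M ∈ xorLines) : 0 ∉ M := by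
  obtain ⟨a, b, ha, hb, hab, rfl⟩ := mem_xorLines.1 hM
  simp only [mem_insert, mem_singleton, not_or]
  exact ⟨ha.symm, hb.symm, fun h => hab (fin16_eq_of_xor_eq_zero a b h.symm)⟩

theorem pgLine_iff_mem_xorLines (L : Finset (Fin 4 → ZMod 2)) :
    PGLine L ↔ toFin16.finsetCongr L ∈ xorLines := by
  rw [mem_xorLines, PGLine]
  constructor
  · rintro ⟨u, v, hu, hv, huv, rfl⟩
    refine ⟨toFin16 u, toFin16 v, toFin16_eq_zero.not.2 hu, toFin16_eq_zero.not.2 hv,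
      toFin16.injective.ne huv, ?_⟩
    simp [Equiv.finsetCongr_apply, toFin16_add]
  · rintro ⟨a, b, ha, hb, hab, hL⟩
    obtain ⟨u, rfl⟩ := toFin16.surjective a
    obtain ⟨v, rfl⟩ := toFin16.surjective b
    refine ⟨u, v, toFin16_eq_zero.not.1 ha, toFin16_eq_zero.not.1 hb, toFin16.injective.ne_iff.1 hab,
      toFin16.finsetCongr.injective ?_⟩
    simp [← hL, Equiv.finsetCongr_apply, toFin16_add]

theorem sup_id_eq_univ_erase_zero_iff {T : Finset (Finset (Fin 16))} (hT : T ⊆ xorLines) :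
    T.sup id = univ.erase 0 ↔ ∀ a : Fin 16, a ≠ 0 → ∃ M ∈ T, a ∈ M := by
  simp only [Finset.ext_iff, mem_sup, id, mem_erase, mem_univ, and_true]
  refine ⟨fun h a ha => (h a).2 ha, fun h a => ⟨?_, h a⟩⟩
  rintro ⟨M, hM, haM⟩ rfl
  exact zero_notMem_of_mem_xorLines (hT hM) haM

theorem isSpread_iff_mem_exactCovers (S : Finset (Finset (Fin 4 → ZMod 2))) :
    IsSpread S ↔ toFin16.finsetCongr.finsetCongr S ∈ exactCovers xorLines 5 (univ.erase 0) := by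
  set T := toFin16.finsetCongr.finsetCongr S
  have hlines : (∀ L ∈ S, PGLine L) ↔ T ⊆ xorLines := by
    simp only [T, Equiv.finsetCongr_apply, subset_iff, forall_mem_map, pgLine_iff_mem_xorLines,
      Equiv.coe_toEmbedding]
  have hdisj : (∀ L ∈ S, ∀ L' ∈ S, L ≠ L' → Disjoint L L') ↔
      (T : Set (Finset (Fin 16))).PairwiseDisjoint id := by
    simp only [T, Equiv.finsetCongr_apply, Set.PairwiseDisjoint, Set.Pairwise, coe_map,
      Set.forall_mem_image, Equiv.coe_toEmbedding, ne_eq, map_inj, Function.onFun, id, disjoint_map,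
      mem_coe]
  have hcover (hT : T ⊆ xorLines) :
      (∀ x : Fin 4 → ZMod 2, x ≠ 0 → ∃ L ∈ S, x ∈ L) ↔ T.sup id = univ.erase 0 := by
    rw [sup_id_eq_univ_erase_zero_iff hT, ← toFin16.forall_congr_right]
    simp only [T, Equiv.finsetCongr_apply, mem_map, exists_exists_and_eq_and, Equiv.coe_toEmbedding,
      ne_eq, toFin16_eq_zero, toFin16.injective.eq_iff, exists_eq_right]
  rw [IsSpread, mem_exactCovers empty_notMem_xorLines, show T.card = S.card from card_map _,
    hlines, hdisj]
  exact and_congr_right' (and_congr_right fun hT => and_congr_right' (hcover hT))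

theorem card_exactCovers_xorLines : (exactCovers xorLines 5 (univ.erase 0)).card = 56 := by
  decide +kernel

/-- PG(3,2) has exactly 56 spreads. -/
theorem card_spreads : Nat.card {S // IsSpread S} = 56 := by
  rw [Nat.card_congr (toFin16.finsetCongr.finsetCongr.subtypeEquiv isSpread_iff_mem_exactCovers),
    Nat.card_eq_fintype_card, Fintype.card_coe, card_exactCovers_xorLines]
end

section
/- The stabilizer in S_8 of a packing of PG(3,2) (acting by permuting the labels of the corresponding labelled Fano plane) is isomorphic to the simple group GL(3,2) of order 168 and consists entirely of even permutations; consequently, for any transposition t ∈ S_8 and any packing x, applying t changes the parity of the minimal length of a permutation mapping a fixed base packing x_0 to x. -/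
set_option maxRecDepth 8000

open Pointwise

/-- A packing of PG(3,2), presented as an {1,...,8}-labelled Fano plane: seven
3-element subsets of the labels, any two of which meet in exactly one label. -/
def IsPacking7 (P : Finset (Finset (Fin 8))) : Prop :=
  P.card = 7 ∧ (∀ A ∈ P, A.card = 3) ∧
    ∀ A ∈ P, ∀ B ∈ P, A ≠ B → (A ∩ B).card = 1

/-- Coxeter length of a permutation = number of inversions. -/
def len (w : Equiv.Perm (Fin 8)) : ℕ :=
  (Finset.univ.filter (fun p : Fin 8 × Fin 8 => p.1 < p.2 ∧ w p.2 < w p.1)).card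

/-- ht(x): the minimal Coxeter length of w ∈ S_8 with w • x₀ = x, for a base packing x₀. -/
noncomputable def htP (x0 x : Finset (Finset (Fin 8))) : ℕ :=
  sInf {k | ∃ w : Equiv.Perm (Fin 8), w • x0 = x ∧ len w = k}

namespace PackingAux

open Equiv Matrix Finset


def vec (i : Fin 8) : Fin 3 → ZMod 2 := fun j => (((i.val + 1) >>> j.val) % 2 : ℕ)
def dec (v : Fin 3 → ZMod 2) : Fin 8 := ⟨((v 0).val + 2*(v 1).val + 4*(v 2).val + 7) % 8, Nat.mod_lt _ (by norm_num)⟩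
lemma vec_dec : ∀ v, vec (dec v) = v := by decide
lemma dec_vec : ∀ i, dec (vec i) = i := by decide
lemma vec7 : vec 7 = 0 := by decide
lemma dec0 : dec 0 = 7 := by decide
lemma vec_inj : Function.Injective vec := fun a b h => by rw [← dec_vec a, h, dec_vec]
lemma dec_inj : Function.Injective dec := fun a b h => by rw [← vec_dec a, h, vec_dec]
lemma addself : ∀ w : Fin 3 → ZMod 2, w + w = 0 := by decide
lemma negself : ∀ w : Fin 3 → ZMod 2, -w = w := by decide
lemma zmodcases : ∀ c : ZMod 2, c = 0 ∨ c = 1 := by decide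

def P0 : Finset (Finset (Fin 8)) := {{0,1,2},{0,3,4},{1,3,5},{2,3,6},{0,5,6},{1,4,6},{2,4,5}}
lemma mem_P0_iff : ∀ A : Finset (Fin 8), A ∈ P0 ↔ (A.card = 3 ∧ (7:Fin 8) ∉ A ∧ ∑ i ∈ A, vec i = 0) := by decide
lemma line_mem : ∀ u v : Fin 3 → ZMod 2, u ≠ 0 → v ≠ 0 → u ≠ v → ({dec u, dec v, dec (u+v)} : Finset (Fin 8)) ∈ P0 := by decide
lemma covered : ∀ x : Fin 8, x ≠ 7 → ∃ A ∈ P0, x ∈ A := by decide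

def pfun (M : Matrix (Fin 3) (Fin 3) (ZMod 2)) (i : Fin 8) : Fin 8 := dec (M.mulVec (vec i))

lemma pfun_pfun (M N : Matrix (Fin 3) (Fin 3) (ZMod 2)) (i : Fin 8) :
    pfun M (pfun N i) = pfun (M * N) i := by
  simp [pfun, vec_dec, Matrix.mulVec_mulVec]

lemma pfun_one (i : Fin 8) : pfun 1 i = i := by simp [pfun, dec_vec]

def Phi : Matrix.GeneralLinearGroup (Fin 3) (ZMod 2) →* Equiv.Perm (Fin 8) where
  toFun g := { toFun := pfun g.val, invFun := pfun g⁻¹.val,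
               left_inv := fun i => by
                 rw [pfun_pfun, ← Units.val_mul, inv_mul_cancel, Units.val_one, pfun_one]
               right_inv := fun i => by
                 rw [pfun_pfun, ← Units.val_mul, mul_inv_cancel, Units.val_one, pfun_one] }
  map_one' := Equiv.ext fun i => by
    show pfun (1 : Matrix.GeneralLinearGroup (Fin 3) (ZMod 2)).val i = i
    rw [Units.val_one, pfun_one]
  map_mul' g h := Equiv.ext fun i => by
    show pfun (g*h).val i = pfun g.val (pfun h.val i)
    rw [pfun_pfun, Units.val_mul]

lemma Phi_apply (g : Matrix.GeneralLinearGroup (Fin 3) (ZMod 2)) (i : Fin 8) :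
    Phi g i = dec (g.val.mulVec (vec i)) := rfl

lemma Phi_seven (g : Matrix.GeneralLinearGroup (Fin 3) (ZMod 2)) : Phi g 7 = 7 := by
  rw [Phi_apply, vec7, Matrix.mulVec_zero, dec0]

open Pointwise

lemma Phi_smul (g : Matrix.GeneralLinearGroup (Fin 3) (ZMod 2)) : Phi g • P0 = P0 := by
  refine Finset.eq_of_subset_of_card_le ?_ (le_of_eq (Finset.card_smul_finset _ _).symm)
  intro A hA
  rw [Finset.mem_smul_finset] at hA
  obtain ⟨B, hB, rfl⟩ := hA
  rw [mem_P0_iff] at hB ⊢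
  obtain ⟨hc, h7, hs⟩ := hB
  have hBi : (Phi g • B : Finset (Fin 8)) = B.image (Phi g) := rfl
  refine ⟨?_, ?_, ?_⟩
  · rw [Finset.card_smul_finset, hc]
  · intro h7'
    rw [Finset.mem_smul_finset] at h7'
    obtain ⟨y, hy, hy7⟩ := h7'
    have : y = 7 := (Phi g).injective (by rwa [← Phi_seven g] at hy7)
    exact h7 (this ▸ hy)
  · rw [hBi, Finset.sum_image (fun x _ y _ h => (Phi g).injective h)]
    have : ∀ b ∈ B, vec (Phi g b) = g.val.mulVecLin (vec b) := by
      intro b _; rw [Phi_apply, vec_dec, Matrix.mulVecLin_apply]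
    rw [Finset.sum_congr rfl this, ← map_sum, hs, map_zero]

lemma Phi_surj_on_stab (σ : Equiv.Perm (Fin 8)) (hσ : σ • P0 = P0) : ∃ g, Phi g = σ := by
  have σmem : ∀ A ∈ P0, σ • A ∈ P0 := fun A hA => by
    rw [← hσ]; exact Finset.smul_mem_smul_finset hA
  have σ7 : σ 7 = 7 := by
    by_contra h7
    obtain ⟨A, hA, hmem⟩ := covered (σ 7) h7
    rw [← hσ, Finset.mem_smul_finset] at hA
    obtain ⟨B, hB, rfl⟩ := hA
    rw [Finset.mem_smul_finset] at hmem
    obtain ⟨y, hy, hyσ⟩ := hmem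
    have : y = (7 : Fin 8) := σ.injective hyσ
    exact ((mem_P0_iff B).mp hB).2.1 (this ▸ hy)
  set f : (Fin 3 → ZMod 2) → (Fin 3 → ZMod 2) := fun v => vec (σ (dec v)) with hf
  have hf0 : f 0 = 0 := by rw [hf]; simp only [dec0, σ7, vec7]
  have hfz : ∀ w, f w = 0 → w = 0 := by
    intro w hw
    have h1 : σ (dec w) = 7 := vec_inj (show vec (σ (dec w)) = vec 7 from hw.trans vec7.symm)
    have h1 : σ (dec w) = 7 := vec_inj (show vec (σ (dec w)) = vec 7 from hw.trans vec7.symm)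
    have h2 : dec w = 7 := σ.injective (by rw [h1, σ7])
    rw [← vec_dec w, h2, vec7]
  have hfadd : ∀ u v, f (u + v) = f u + f v := by
    intro u v
    rcases eq_or_ne u 0 with rfl | hu
    · rw [hf0, zero_add, zero_add]
    rcases eq_or_ne v 0 with rfl | hv
    · rw [hf0, add_zero, add_zero]
    rcases eq_or_ne u v with rfl | huv
    · rw [addself, hf0, (addself (f u)).symm]
    have hL := σmem _ (line_mem u v hu hv huv)
    have hsm : σ • ({dec u, dec v, dec (u+v)} : Finset (Fin 8)) =
        ({σ (dec u), σ (dec v), σ (dec (u+v))} : Finset (Fin 8)) := by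
      simp [Finset.smul_finset_insert, Finset.smul_finset_singleton, Equiv.Perm.smul_def]
    rw [hsm] at hL
    have huv2 : u ≠ u + v := fun h =>
      hv (add_left_cancel (a := u) (by rw [add_zero]; exact h)).symm
    have hvv2 : v ≠ u + v := fun h =>
      hu (add_right_cancel (b := v) (a := (0 : Fin 3 → ZMod 2)) (by rw [zero_add]; exact h)).symm
    have d1 : σ (dec u) ≠ σ (dec v) := fun h => huv (dec_inj (σ.injective h))
    have d2 : σ (dec u) ≠ σ (dec (u+v)) := fun h => huv2 (dec_inj (σ.injective h))
    have d3 : σ (dec v) ≠ σ (dec (u+v)) := fun h => hvv2 (dec_inj (σ.injective h))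
    have hsum := ((mem_P0_iff _).mp hL).2.2
    rw [Finset.sum_insert (by simp [d1, d2]), Finset.sum_insert (by simp [d3]),
      Finset.sum_singleton] at hsum
    have : -(f (u+v)) = f u + f v := by
      apply neg_eq_of_add_eq_zero_left
      rw [add_assoc]
      exact hsum
    rw [← this, negself]
  have hinj : Function.Injective f := by
    intro u v h
    have : f (u + v) = 0 := by rw [hfadd, h, addself]
    have huv : u + v = 0 := hfz _ this
    have h2 : -v = u := neg_eq_of_add_eq_zero_left huv
    rw [← h2, negself]
  let flin : (Fin 3 → ZMod 2) →ₗ[ZMod 2] (Fin 3 → ZMod 2) :=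
    { toFun := f, map_add' := hfadd,
      map_smul' := by
        intro c u
        rcases zmodcases c with rfl | rfl
        · simp [hf0]
        · simp }
  have hbij : Function.Bijective flin := ⟨hinj, Finite.injective_iff_surjective.mp hinj⟩
  let e := LinearEquiv.ofBijective flin hbij
  have hco1 : flin ∘ₗ (e.symm : (Fin 3 → ZMod 2) →ₗ[ZMod 2] (Fin 3 → ZMod 2)) = LinearMap.id := by
    apply LinearMap.ext; intro v
    show flin (e.symm v) = v
    have : flin (e.symm v) = e (e.symm v) := rfl
    rw [this, e.apply_symm_apply]
  have hco2 : (e.symm : (Fin 3 → ZMod 2) →ₗ[ZMod 2] (Fin 3 → ZMod 2)) ∘ₗ flin = LinearMap.id := by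
    apply LinearMap.ext; intro v
    show e.symm (flin v) = v
    have : flin v = e v := rfl
    rw [this, e.symm_apply_apply]
  refine ⟨⟨LinearMap.toMatrix' flin, LinearMap.toMatrix' (e.symm : (Fin 3 → ZMod 2) →ₗ[ZMod 2] (Fin 3 → ZMod 2)), ?_, ?_⟩, ?_⟩
  · rw [← LinearMap.toMatrix'_comp, hco1, LinearMap.toMatrix'_id]
  · rw [← LinearMap.toMatrix'_comp, hco2, LinearMap.toMatrix'_id]
  · apply Equiv.ext; intro i
    rw [Phi_apply]
    show dec ((LinearMap.toMatrix' flin).mulVec (vec i)) = σ i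
    have : (LinearMap.toMatrix' flin).mulVec (vec i) = flin (vec i) := by
      rw [← Matrix.toLin'_apply, Matrix.toLin'_toMatrix']
    rw [this]
    show dec (vec (σ (dec (vec i)))) = σ i
    rw [dec_vec, dec_vec]

lemma Phi_inj : Function.Injective Phi := by
  intro g h hgh
  have key : ∀ (u : Matrix.GeneralLinearGroup (Fin 3) (ZMod 2)) (v : Fin 3 → ZMod 2),
      u.val.mulVec v = vec (Phi u (dec v)) := by
    intro u v; rw [Phi_apply, vec_dec, vec_dec]
  apply Units.ext
  have : ∀ v, g.val.mulVec v = h.val.mulVec v := by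
    intro v; rw [key, key, hgh]
  have h1 : Matrix.toLin' g.val = Matrix.toLin' h.val := by
    apply LinearMap.ext; intro v; rw [Matrix.toLin'_apply, Matrix.toLin'_apply, this]
  have := congrArg LinearMap.toMatrix' h1
  rwa [LinearMap.toMatrix'_toLin', LinearMap.toMatrix'_toLin'] at this

lemma sign_Phi (g : Matrix.GeneralLinearGroup (Fin 3) (ZMod 2)) : Equiv.Perm.sign (Phi g) = 1 := by
  have hdet : g.val.det ≠ 0 := by
    have : IsUnit g.val.det := (Matrix.isUnit_iff_isUnit_det _).mp g.isUnit
    exact this.ne_zero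
  refine Matrix.diagonal_transvection_induction_of_det_ne_zero
    (fun M => ∀ h : Matrix.GeneralLinearGroup (Fin 3) (ZMod 2), h.val = M → Equiv.Perm.sign (Phi h) = 1)
    g.val hdet ?_ ?_ ?_ g rfl
  · intro D hD h hh
    have hD1 : ∀ i, D i = 1 := by
      intro i
      have hne : D i ≠ 0 := by
        intro h0
        apply hD
        rw [Matrix.det_diagonal]
        exact Finset.prod_eq_zero (Finset.mem_univ i) h0
      have hx : ∀ x : ZMod 2, x ≠ 0 → x = 1 := by decide
      exact hx _ hne
    have : h = 1 := by
      apply Units.ext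
      rw [hh, show D = fun _ => (1:ZMod 2) from funext hD1, Matrix.diagonal_one, Units.val_one]
    rw [this, _root_.map_one, _root_.map_one]
  · rintro ⟨i, j, hij, c⟩ h hh
    rw [Matrix.TransvectionStruct.toMatrix_mk] at hh
    rcases zmodcases c with rfl | rfl
    · have : h = 1 := by
        apply Units.ext
        rw [hh, Matrix.transvection, Matrix.single_zero, add_zero, Units.val_one]
      rw [this, _root_.map_one, _root_.map_one]
    · have key : ∀ (a b c' d : Fin 8), a ≠ b → c' ≠ d →
        Phi h = Equiv.swap a b * Equiv.swap c' d → Equiv.Perm.sign (Phi h) = 1 := by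
        intro a b c' d hab hcd hp
        rw [hp, _root_.map_mul, Equiv.Perm.sign_swap hab, Equiv.Perm.sign_swap hcd]
        norm_num
      fin_cases i <;> fin_cases j <;> first
        | exact absurd rfl hij
        | (first
          | exact key 1 2 5 6 (by decide) (by decide) (Equiv.ext fun x => by rw [Phi_apply, hh]; revert x; decide)
          | exact key 3 4 5 6 (by decide) (by decide) (Equiv.ext fun x => by rw [Phi_apply, hh]; revert x; decide)
          | exact key 0 2 4 6 (by decide) (by decide) (Equiv.ext fun x => by rw [Phi_apply, hh]; revert x; decide)
          | exact key 3 5 4 6 (by decide) (by decide) (Equiv.ext fun x => by rw [Phi_apply, hh]; revert x; decide)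
          | exact key 0 4 2 6 (by decide) (by decide) (Equiv.ext fun x => by rw [Phi_apply, hh]; revert x; decide)
          | exact key 1 5 2 6 (by decide) (by decide) (Equiv.ext fun x => by rw [Phi_apply, hh]; revert x; decide))
  · intro M N hM hN pM pN h hh
    let uM : Matrix.GeneralLinearGroup (Fin 3) (ZMod 2) := Matrix.nonsingInvUnit M (Ne.isUnit hM)
    let uN : Matrix.GeneralLinearGroup (Fin 3) (ZMod 2) := Matrix.nonsingInvUnit N (Ne.isUnit hN)
    have hMN : h = uM * uN := by
      apply Units.ext
      rw [hh, Units.val_mul]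
      rfl
    rw [hMN, _root_.map_mul, _root_.map_mul, pM uM rfl, pN uN rfl, mul_one]

def Cov (P : Finset (Finset (Fin 8))) : Finset (Fin 8) :=
  Finset.univ.filter (fun x => 0 < (P.filter (fun A => x ∈ A)).card)

variable {P : Finset (Finset (Fin 8))}

lemma uniq_line (hP : IsPacking7 P) {A B : Finset (Fin 8)} {x y : Fin 8}
    (hA : A ∈ P) (hB : B ∈ P) (hxA : x ∈ A) (hyA : y ∈ A) (hxB : x ∈ B) (hyB : y ∈ B)
    (hxy : x ≠ y) : A = B := by
  by_contra hne
  have h1 := hP.2.2 A hA B hB hne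
  have hsub : ({x, y} : Finset (Fin 8)) ⊆ A ∩ B := by
    intro z hz
    rcases Finset.mem_insert.mp hz with rfl | hz
    · exact Finset.mem_inter.mpr ⟨hxA, hxB⟩
    · rw [Finset.mem_singleton] at hz; subst hz
      exact Finset.mem_inter.mpr ⟨hyA, hyB⟩
  have h2 : ({x,y} : Finset (Fin 8)).card ≤ (A ∩ B).card := Finset.card_le_card hsub
  rw [Finset.card_insert_of_notMem (by simp [hxy]), Finset.card_singleton] at h2
  omega

lemma third_point (hP : IsPacking7 P) {A : Finset (Fin 8)} {x y : Fin 8}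
    (hA : A ∈ P) (hx : x ∈ A) (hy : y ∈ A) (hxy : x ≠ y) :
    ∃ t, t ≠ x ∧ t ≠ y ∧ A = {x, y, t} := by
  have h3 := hP.2.1 A hA
  have hc : ((A.erase x).erase y).card = 1 := by
    rw [Finset.card_erase_of_mem (Finset.mem_erase.mpr ⟨hxy.symm, hy⟩),
      Finset.card_erase_of_mem hx, h3]
  obtain ⟨t, ht⟩ := Finset.card_eq_one.mp hc
  have htm : t ∈ (A.erase x).erase y := ht ▸ Finset.mem_singleton_self t
  have hty : t ≠ y := Finset.ne_of_mem_erase htm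
  have htx : t ≠ x := Finset.ne_of_mem_erase (Finset.mem_of_mem_erase htm)
  have htA : t ∈ A := Finset.mem_of_mem_erase (Finset.mem_of_mem_erase htm)
  refine ⟨t, htx, hty, ?_⟩
  have hsub : ({x, y, t} : Finset (Fin 8)) ⊆ A := by
    intro z hz
    rcases Finset.mem_insert.mp hz with rfl | hz
    · exact hx
    rcases Finset.mem_insert.mp hz with rfl | hz
    · exact hy
    · rw [Finset.mem_singleton] at hz; subst hz; exact htA
  have hcard : ({x, y, t} : Finset (Fin 8)).card = 3 := by
    rw [Finset.card_insert_of_notMem (by simp [hxy, htx.symm]),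
      Finset.card_insert_of_notMem (by simp [hty.symm]), Finset.card_singleton]
  exact (Finset.eq_of_subset_of_card_le hsub (by omega)).symm

lemma deg_le3 (hP : IsPacking7 P) (x : Fin 8) : (P.filter (fun A => x ∈ A)).card ≤ 3 := by
  set S := P.filter (fun A => x ∈ A) with hS
  have hdisj : ∀ A ∈ S, ∀ B ∈ S, A ≠ B → Disjoint (A.erase x) (B.erase x) := by
    intro A hA B hB hne
    rw [Finset.disjoint_left]
    intro z hzA hzB
    rw [hS, Finset.mem_filter] at hA hB
    exact hne (uniq_line hP hA.1 hB.1 hA.2 (Finset.mem_of_mem_erase hzA) hB.2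
      (Finset.mem_of_mem_erase hzB) (fun h => Finset.ne_of_mem_erase hzA h.symm))
  have hcard : (S.biUnion (fun A => A.erase x)).card = ∑ A ∈ S, (A.erase x).card :=
    Finset.card_biUnion hdisj
  have hsub : S.biUnion (fun A => A.erase x) ⊆ Finset.univ.erase x := by
    intro z hz
    obtain ⟨A, _, hzA⟩ := Finset.mem_biUnion.mp hz
    exact Finset.mem_erase.mpr ⟨Finset.ne_of_mem_erase hzA, Finset.mem_univ z⟩
  have h7 : (Finset.univ.erase x : Finset (Fin 8)).card = 7 := by
    rw [Finset.card_erase_of_mem (Finset.mem_univ x)]; simp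
  have h2 : ∀ A ∈ S, (A.erase x).card = 2 := by
    intro A hA
    rw [hS, Finset.mem_filter] at hA
    rw [Finset.card_erase_of_mem hA.2, hP.2.1 A hA.1]
  have hle := Finset.card_le_card hsub
  rw [hcard, Finset.sum_congr rfl h2, Finset.sum_const, h7, smul_eq_mul] at hle
  omega

lemma deg_eq3 (hP : IsPacking7 P) {A : Finset (Fin 8)} {x : Fin 8} (hA : A ∈ P) (hx : x ∈ A) :
    (P.filter (fun B => x ∈ B)).card = 3 := by
  set Q := P.erase A with hQ
  have hQcard : Q.card = 6 := by rw [hQ, Finset.card_erase_of_mem hA, hP.1]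
  have hcover : Q = A.biUnion (fun y => Q.filter (fun B => y ∈ B)) := by
    ext B
    rw [Finset.mem_biUnion]
    constructor
    · intro hB
      have hBP : B ∈ P := Finset.mem_of_mem_erase hB
      have hne : A ≠ B := fun h => (Finset.ne_of_mem_erase hB) h.symm
      have h1 := hP.2.2 A hA B hBP hne
      obtain ⟨y, hy⟩ := Finset.card_eq_one.mp h1
      have hym : y ∈ A ∩ B := hy ▸ Finset.mem_singleton_self y
      exact ⟨y, (Finset.mem_inter.mp hym).1,
        Finset.mem_filter.mpr ⟨hB, (Finset.mem_inter.mp hym).2⟩⟩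
    · rintro ⟨y, _, hBf⟩
      exact (Finset.mem_filter.mp hBf).1
  have hdisjQ : ∀ y ∈ A, ∀ z ∈ A, y ≠ z →
      Disjoint (Q.filter (fun B => y ∈ B)) (Q.filter (fun B => z ∈ B)) := by
    intro y hy z hz hyz
    rw [Finset.disjoint_left]
    intro B hBy hBz
    rw [Finset.mem_filter] at hBy hBz
    have hBP : B ∈ P := Finset.mem_of_mem_erase hBy.1
    have hne : A ≠ B := fun h => (Finset.ne_of_mem_erase hBy.1) h.symm
    exact hne (uniq_line hP hA hBP hy hz hBy.2 hBz.2 hyz)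
  have hsum : ∑ y ∈ A, (Q.filter (fun B => y ∈ B)).card = 6 := by
    rw [← Finset.card_biUnion hdisjQ, ← hcover, hQcard]
  have hdegrel : ∀ y ∈ A, (P.filter (fun B => y ∈ B)).card
      = (Q.filter (fun B => y ∈ B)).card + 1 := by
    intro y hy
    have hins : P.filter (fun B => y ∈ B) = insert A (Q.filter (fun B => y ∈ B)) := by
      ext B
      simp only [Finset.mem_filter, Finset.mem_insert, hQ, Finset.mem_erase]
      constructor
      · rintro ⟨hBP, hyB⟩
        rcases eq_or_ne B A with rfl | hne
        · exact Or.inl rfl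
        · exact Or.inr ⟨⟨hne, hBP⟩, hyB⟩
      · rintro (rfl | ⟨⟨_, hBP⟩, hyB⟩)
        · exact ⟨hA, hy⟩
        · exact ⟨hBP, hyB⟩
    rw [hins, Finset.card_insert_of_notMem]
    intro hmem
    exact Finset.notMem_erase A P ((Finset.mem_filter.mp hmem).1)
  have hle : ∀ y ∈ A, (Q.filter (fun B => y ∈ B)).card ≤ 2 := by
    intro y hy
    have h1 := deg_le3 hP y
    have h2 := hdegrel y hy
    omega
  have hsplit : ∑ y ∈ A.erase x, (Q.filter (fun B => y ∈ B)).card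
      + (Q.filter (fun B => x ∈ B)).card = 6 := by
    rw [Finset.sum_erase_add A _ hx]; exact hsum
  have hbound : ∑ y ∈ A.erase x, (Q.filter (fun B => y ∈ B)).card ≤ 4 := by
    have := Finset.sum_le_card_nsmul (A.erase x) (fun y => (Q.filter (fun B => y ∈ B)).card) 2
      (fun y hy => hle y (Finset.mem_of_mem_erase hy))
    rw [Finset.card_erase_of_mem hx, hP.2.1 A hA] at this
    simpa using this
  have h1 := hdegrel x hx
  have h2 := hle x hx
  omega

lemma mem_Cov (hP : IsPacking7 P) {A : Finset (Fin 8)} {x : Fin 8} (hA : A ∈ P) (hx : x ∈ A) :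
    x ∈ Cov P := by
  rw [Cov, Finset.mem_filter]
  exact ⟨Finset.mem_univ x, by rw [deg_eq3 hP hA hx]; omega⟩

lemma Cov_deg3 (hP : IsPacking7 P) {x : Fin 8} (hx : x ∈ Cov P) :
    (P.filter (fun B => x ∈ B)).card = 3 := by
  rw [Cov, Finset.mem_filter] at hx
  obtain ⟨A, hA⟩ := Finset.card_pos.mp hx.2
  rw [Finset.mem_filter] at hA
  exact deg_eq3 hP hA.1 hA.2

lemma Cov_card (hP : IsPacking7 P) : (Cov P).card = 7 := by
  have htot : ∑ x : Fin 8, (P.filter (fun A => x ∈ A)).card = 21 := by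
    have h1 : ∀ x : Fin 8, (P.filter (fun A => x ∈ A)).card = ∑ A ∈ P, if x ∈ A then 1 else 0 :=
      fun x => Finset.card_filter _ _
    rw [Finset.sum_congr rfl (fun x _ => h1 x), Finset.sum_comm]
    have h2 : ∀ A ∈ P, (∑ x : Fin 8, if x ∈ A then 1 else 0) = 3 := by
      intro A hA
      rw [← Finset.card_filter]
      rw [Finset.filter_univ_mem]
      exact hP.2.1 A hA
    rw [Finset.sum_congr rfl h2, Finset.sum_const, hP.1, smul_eq_mul]
  have hsplit := Finset.sum_filter_add_sum_filter_not Finset.univ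
    (fun x => 0 < (P.filter (fun A => x ∈ A)).card) (fun x => (P.filter (fun A => x ∈ A)).card)
  have hzero : ∑ x ∈ Finset.univ.filter (fun x => ¬ 0 < (P.filter (fun A => x ∈ A)).card),
      (P.filter (fun A => x ∈ A)).card = 0 := by
    apply Finset.sum_eq_zero
    intro x hx
    rw [Finset.mem_filter] at hx
    omega
  have hthree : ∑ x ∈ Cov P, (P.filter (fun A => x ∈ A)).card = 3 * (Cov P).card := by
    rw [Finset.sum_congr rfl (fun x hx => Cov_deg3 hP hx), Finset.sum_const]
    ring
  rw [htot, hzero, add_zero] at hsplit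
  rw [show (Finset.univ.filter (fun x => 0 < (P.filter (fun A => x ∈ A)).card)) = Cov P from rfl,
    hthree] at hsplit
  omega

lemma exline (hP : IsPacking7 P) {x y : Fin 8} (hx : x ∈ Cov P) (hy : y ∈ Cov P)
    (hxy : x ≠ y) : ∃ A ∈ P, x ∈ A ∧ y ∈ A := by
  set S := P.filter (fun A => x ∈ A) with hS
  have hScard : S.card = 3 := Cov_deg3 hP hx
  have hdisj : ∀ A ∈ S, ∀ B ∈ S, A ≠ B → Disjoint (A.erase x) (B.erase x) := by
    intro A hA B hB hne
    rw [Finset.disjoint_left]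
    intro z hzA hzB
    rw [hS, Finset.mem_filter] at hA hB
    exact hne (uniq_line hP hA.1 hB.1 hA.2 (Finset.mem_of_mem_erase hzA) hB.2
      (Finset.mem_of_mem_erase hzB) (fun h => Finset.ne_of_mem_erase hzA h.symm))
  have h2 : ∀ A ∈ S, (A.erase x).card = 2 := by
    intro A hA
    rw [hS, Finset.mem_filter] at hA
    rw [Finset.card_erase_of_mem hA.2, hP.2.1 A hA.1]
  have hTcard : (S.biUnion (fun A => A.erase x)).card = 6 := by
    rw [Finset.card_biUnion hdisj, Finset.sum_congr rfl h2, Finset.sum_const, hScard, smul_eq_mul]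
  have hTsub : S.biUnion (fun A => A.erase x) ⊆ (Cov P).erase x := by
    intro z hz
    obtain ⟨A, hAS, hzA⟩ := Finset.mem_biUnion.mp hz
    rw [hS, Finset.mem_filter] at hAS
    exact Finset.mem_erase.mpr ⟨Finset.ne_of_mem_erase hzA,
      mem_Cov hP hAS.1 (Finset.mem_of_mem_erase hzA)⟩
  have hCx : ((Cov P).erase x).card = 6 := by
    rw [Finset.card_erase_of_mem hx, Cov_card hP]
  have hTeq : S.biUnion (fun A => A.erase x) = (Cov P).erase x :=
    Finset.eq_of_subset_of_card_le hTsub (by omega)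
  have hyT : y ∈ S.biUnion (fun A => A.erase x) := by
    rw [hTeq]; exact Finset.mem_erase.mpr ⟨hxy.symm, hy⟩
  obtain ⟨A, hAS, hyA⟩ := Finset.mem_biUnion.mp hyT
  rw [hS, Finset.mem_filter] at hAS
  exact ⟨A, hAS.1, hAS.2, Finset.mem_of_mem_erase hyA⟩

lemma exists_smul_eq (hP : IsPacking7 P) : ∃ g : Equiv.Perm (Fin 8), g • P0 = P := by
  classical
  have hPne : P.Nonempty := Finset.card_pos.mp (by rw [hP.1]; omega)
  obtain ⟨L1, hL1P⟩ := hPne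
  obtain ⟨a, b, d, hab, had, hbd, hL1⟩ := Finset.card_eq_three.mp (hP.2.1 L1 hL1P)
  have maL1 : a ∈ L1 := by rw [hL1]; simp
  have mbL1 : b ∈ L1 := by rw [hL1]; simp
  have mdL1 : d ∈ L1 := by rw [hL1]; simp
  have haC : a ∈ Cov P := mem_Cov hP hL1P maL1
  have hbC : b ∈ Cov P := mem_Cov hP hL1P mbL1
  have hdC : d ∈ Cov P := mem_Cov hP hL1P mdL1
  have hCdiff : (Cov P \ L1).Nonempty := by
    apply Finset.card_pos.mp
    have h1 := Finset.le_card_sdiff L1 (Cov P)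
    rw [Cov_card hP, hP.2.1 L1 hL1P] at h1
    omega
  obtain ⟨c, hc⟩ := hCdiff
  have hcC : c ∈ Cov P := (Finset.mem_sdiff.mp hc).1
  have hcL1 : c ∉ L1 := (Finset.mem_sdiff.mp hc).2
  have hca : c ≠ a := fun h => hcL1 (h ▸ maL1)
  have hcb : c ≠ b := fun h => hcL1 (h ▸ mbL1)
  have hcd : c ≠ d := fun h => hcL1 (h ▸ mdL1)
  obtain ⟨Lac, hLacP, maLac, mcLac⟩ := exline hP haC hcC (Ne.symm hca)
  obtain ⟨e, hea, hec, hLac⟩ := third_point hP hLacP maLac mcLac (Ne.symm hca)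
  have meLac : e ∈ Lac := by rw [hLac]; simp
  have heC : e ∈ Cov P := mem_Cov hP hLacP meLac
  have heb : e ≠ b := by
    intro h
    have hm : b ∈ Lac := h ▸ meLac
    have hEq : Lac = L1 := uniq_line hP hLacP hL1P maLac hm maL1 mbL1 hab
    exact hcL1 (hEq ▸ mcLac)
  have hed : e ≠ d := by
    intro h
    have hm : d ∈ Lac := h ▸ meLac
    have hEq : Lac = L1 := uniq_line hP hLacP hL1P maLac hm maL1 mdL1 had
    exact hcL1 (hEq ▸ mcLac)
  obtain ⟨Lbc, hLbcP, mbLbc, mcLbc⟩ := exline hP hbC hcC (Ne.symm hcb)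
  obtain ⟨f, hfb, hfc, hLbc⟩ := third_point hP hLbcP mbLbc mcLbc (Ne.symm hcb)
  have mfLbc : f ∈ Lbc := by rw [hLbc]; simp
  have hfC : f ∈ Cov P := mem_Cov hP hLbcP mfLbc
  have hfa : f ≠ a := by
    intro h
    have hm : a ∈ Lbc := h ▸ mfLbc
    have hEq : Lbc = L1 := uniq_line hP hLbcP hL1P hm mbLbc maL1 mbL1 hab
    exact hcL1 (hEq ▸ mcLbc)
  have hfd : f ≠ d := by
    intro h
    have hm : d ∈ Lbc := h ▸ mfLbc
    have hEq : Lbc = L1 := uniq_line hP hLbcP hL1P mbLbc hm mbL1 mdL1 hbd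
    exact hcL1 (hEq ▸ mcLbc)
  have hfe : f ≠ e := by
    intro h
    have hm : e ∈ Lbc := h ▸ mfLbc
    have hEq : Lbc = Lac := uniq_line hP hLbcP hLacP mcLbc hm mcLac meLac (Ne.symm hec)
    have hm2 : b ∈ Lac := hEq ▸ mbLbc
    rw [hLac] at hm2
    simp only [Finset.mem_insert, Finset.mem_singleton] at hm2
    rcases hm2 with h2|h2|h2
    exacts [hab h2.symm, hcb h2.symm, heb h2.symm]
  obtain ⟨Laf, hLafP, maLaf, mfLaf⟩ := exline hP haC hfC (Ne.symm hfa)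
  obtain ⟨g, hga, hgf, hLaf⟩ := third_point hP hLafP maLaf mfLaf (Ne.symm hfa)
  have mgLaf : g ∈ Laf := by rw [hLaf]; simp
  have hgC : g ∈ Cov P := mem_Cov hP hLafP mgLaf
  have hfL1 : f ∉ L1 := by
    rw [hL1]
    simp only [Finset.mem_insert, Finset.mem_singleton]
    push_neg
    exact ⟨hfa, hfb, hfd⟩
  have hgb : g ≠ b := by
    intro h
    have hm : b ∈ Laf := h ▸ mgLaf
    have hEq : Laf = L1 := uniq_line hP hLafP hL1P maLaf hm maL1 mbL1 hab
    exact hfL1 (hEq ▸ mfLaf)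
  have hgd : g ≠ d := by
    intro h
    have hm : d ∈ Laf := h ▸ mgLaf
    have hEq : Laf = L1 := uniq_line hP hLafP hL1P maLaf hm maL1 mdL1 had
    exact hfL1 (hEq ▸ mfLaf)
  have hgc : g ≠ c := by
    intro h
    have hm : c ∈ Laf := h ▸ mgLaf
    have hEq : Laf = Lbc := uniq_line hP hLafP hLbcP hm mfLaf mcLbc mfLbc (Ne.symm hfc)
    have hm2 : a ∈ Lbc := hEq ▸ maLaf
    rw [hLbc] at hm2
    simp only [Finset.mem_insert, Finset.mem_singleton] at hm2
    rcases hm2 with h2|h2|h2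
    exacts [hab h2, hca h2.symm, hfa h2.symm]
  have hge : g ≠ e := by
    intro h
    have hm : e ∈ Laf := h ▸ mgLaf
    have hEq : Laf = Lac := uniq_line hP hLafP hLacP maLaf hm maLac meLac (Ne.symm hea)
    have hm2 : f ∈ Lac := hEq ▸ mfLaf
    rw [hLac] at hm2
    simp only [Finset.mem_insert, Finset.mem_singleton] at hm2
    rcases hm2 with h2|h2|h2
    exacts [hfa h2, hfc h2, hfe h2]
  have hsub7 : ({a, b, d, c, e, f, g} : Finset (Fin 8)) ⊆ Cov P := by
    intro w hw
    simp only [Finset.mem_insert, Finset.mem_singleton] at hw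
    rcases hw with rfl|rfl|rfl|rfl|rfl|rfl|rfl
    exacts [haC, hbC, hdC, hcC, heC, hfC, hgC]
  have na : a ∉ ({b, d, c, e, f, g} : Finset (Fin 8)) := by
    simp only [Finset.mem_insert, Finset.mem_singleton]
    push_neg
    exact ⟨hab, had, Ne.symm hca, Ne.symm hea, Ne.symm hfa, Ne.symm hga⟩
  have nb : b ∉ ({d, c, e, f, g} : Finset (Fin 8)) := by
    simp only [Finset.mem_insert, Finset.mem_singleton]
    push_neg
    exact ⟨hbd, Ne.symm hcb, Ne.symm heb, Ne.symm hfb, Ne.symm hgb⟩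
  have nd : d ∉ ({c, e, f, g} : Finset (Fin 8)) := by
    simp only [Finset.mem_insert, Finset.mem_singleton]
    push_neg
    exact ⟨Ne.symm hcd, Ne.symm hed, Ne.symm hfd, Ne.symm hgd⟩
  have nc : c ∉ ({e, f, g} : Finset (Fin 8)) := by
    simp only [Finset.mem_insert, Finset.mem_singleton]
    push_neg
    exact ⟨Ne.symm hec, Ne.symm hfc, Ne.symm hgc⟩
  have ne' : e ∉ ({f, g} : Finset (Fin 8)) := by
    simp only [Finset.mem_insert, Finset.mem_singleton]
    push_neg
    exact ⟨Ne.symm hfe, Ne.symm hge⟩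
  have nf : f ∉ ({g} : Finset (Fin 8)) := by
    simp only [Finset.mem_singleton]
    exact Ne.symm hgf
  have hcard7 : ({a, b, d, c, e, f, g} : Finset (Fin 8)).card = 7 := by
    rw [Finset.card_insert_of_notMem na, Finset.card_insert_of_notMem nb,
      Finset.card_insert_of_notMem nd, Finset.card_insert_of_notMem nc,
      Finset.card_insert_of_notMem ne', Finset.card_insert_of_notMem nf,
      Finset.card_singleton]
  have hCov7 : Cov P = {a, b, d, c, e, f, g} :=
    (Finset.eq_of_subset_of_card_le hsub7 (by rw [Cov_card hP, hcard7])).symm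
  have hzdiff : (Finset.univ \ Cov P).Nonempty := by
    apply Finset.card_pos.mp
    rw [Finset.card_sdiff_of_subset (Finset.subset_univ _), Cov_card hP]
    simp
  obtain ⟨z, hz⟩ := hzdiff
  have hzC : z ∉ Cov P := (Finset.mem_sdiff.mp hz).2
  have hza : z ≠ a := fun h => hzC (h ▸ haC)
  have hzb : z ≠ b := fun h => hzC (h ▸ hbC)
  have hzd : z ≠ d := fun h => hzC (h ▸ hdC)
  have hzc : z ≠ c := fun h => hzC (h ▸ hcC)
  have hze : z ≠ e := fun h => hzC (h ▸ heC)
  have hzf : z ≠ f := fun h => hzC (h ▸ hfC)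
  have hzg : z ≠ g := fun h => hzC (h ▸ hgC)
  -- line b e : third point is g
  obtain ⟨Lbe, hLbeP, mbLbe, meLbe⟩ := exline hP hbC heC (Ne.symm heb)
  obtain ⟨t1, ht1b, ht1e, hLbe⟩ := third_point hP hLbeP mbLbe meLbe (Ne.symm heb)
  have mt1Lbe : t1 ∈ Lbe := by rw [hLbe]; simp
  have ht1C : t1 ∈ Cov P := mem_Cov hP hLbeP mt1Lbe
  have ht1a : t1 ≠ a := by
    intro h
    have hm : a ∈ Lbe := h ▸ mt1Lbe
    have hEq : Lbe = L1 := uniq_line hP hLbeP hL1P hm mbLbe maL1 mbL1 hab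
    have hm2 : e ∈ L1 := hEq ▸ meLbe
    rw [hL1] at hm2
    simp only [Finset.mem_insert, Finset.mem_singleton] at hm2
    rcases hm2 with h2|h2|h2
    exacts [hea h2, heb h2, hed h2]
  have ht1c : t1 ≠ c := by
    intro h
    have hm : c ∈ Lbe := h ▸ mt1Lbe
    have hEq : Lbe = Lac := uniq_line hP hLbeP hLacP hm meLbe mcLac meLac (Ne.symm hec)
    have hm2 : b ∈ Lac := hEq ▸ mbLbe
    rw [hLac] at hm2
    simp only [Finset.mem_insert, Finset.mem_singleton] at hm2
    rcases hm2 with h2|h2|h2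
    exacts [hab h2.symm, hcb h2.symm, heb h2.symm]
  have ht1d : t1 ≠ d := by
    intro h
    have hm : d ∈ Lbe := h ▸ mt1Lbe
    have hEq : Lbe = L1 := uniq_line hP hLbeP hL1P mbLbe hm mbL1 mdL1 hbd
    have hm2 : e ∈ L1 := hEq ▸ meLbe
    rw [hL1] at hm2
    simp only [Finset.mem_insert, Finset.mem_singleton] at hm2
    rcases hm2 with h2|h2|h2
    exacts [hea h2, heb h2, hed h2]
  have ht1f : t1 ≠ f := by
    intro h
    have hm : f ∈ Lbe := h ▸ mt1Lbe
    have hEq : Lbe = Lbc := uniq_line hP hLbeP hLbcP mbLbe hm mbLbc mfLbc (Ne.symm hfb)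
    have hm2 : e ∈ Lbc := hEq ▸ meLbe
    rw [hLbc] at hm2
    simp only [Finset.mem_insert, Finset.mem_singleton] at hm2
    rcases hm2 with h2|h2|h2
    exacts [heb h2, hec h2, hfe h2.symm]
  have ht1g : t1 = g := by
    have h1 : t1 ∈ ({a, b, d, c, e, f, g} : Finset (Fin 8)) := hCov7 ▸ ht1C
    simp only [Finset.mem_insert, Finset.mem_singleton] at h1
    rcases h1 with h|h|h|h|h|h|h
    exacts [absurd h ht1a, absurd h ht1b, absurd h ht1d, absurd h ht1c, absurd h ht1e,
      absurd h ht1f, h]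
  rw [ht1g] at hLbe
  -- line c d : third point is g
  obtain ⟨Lcd, hLcdP, mcLcd, mdLcd⟩ := exline hP hcC hdC hcd
  obtain ⟨t2, ht2c, ht2d, hLcd⟩ := third_point hP hLcdP mcLcd mdLcd hcd
  have mt2Lcd : t2 ∈ Lcd := by rw [hLcd]; simp
  have ht2C : t2 ∈ Cov P := mem_Cov hP hLcdP mt2Lcd
  have ht2a : t2 ≠ a := by
    intro h
    have hm : a ∈ Lcd := h ▸ mt2Lcd
    have hEq : Lcd = Lac := uniq_line hP hLcdP hLacP hm mcLcd maLac mcLac (Ne.symm hca)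
    have hm2 : d ∈ Lac := hEq ▸ mdLcd
    rw [hLac] at hm2
    simp only [Finset.mem_insert, Finset.mem_singleton] at hm2
    rcases hm2 with h2|h2|h2
    exacts [had h2.symm, hcd h2.symm, hed h2.symm]
  have ht2b : t2 ≠ b := by
    intro h
    have hm : b ∈ Lcd := h ▸ mt2Lcd
    have hEq : Lcd = L1 := uniq_line hP hLcdP hL1P hm mdLcd mbL1 mdL1 hbd
    exact hcL1 (hEq ▸ mcLcd)
  have ht2e : t2 ≠ e := by
    intro h
    have hm : e ∈ Lcd := h ▸ mt2Lcd
    have hEq : Lcd = Lac := uniq_line hP hLcdP hLacP mcLcd hm mcLac meLac (Ne.symm hec)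
    have hm2 : d ∈ Lac := hEq ▸ mdLcd
    rw [hLac] at hm2
    simp only [Finset.mem_insert, Finset.mem_singleton] at hm2
    rcases hm2 with h2|h2|h2
    exacts [had h2.symm, hcd h2.symm, hed h2.symm]
  have ht2f : t2 ≠ f := by
    intro h
    have hm : f ∈ Lcd := h ▸ mt2Lcd
    have hEq : Lcd = Lbc := uniq_line hP hLcdP hLbcP mcLcd hm mcLbc mfLbc (Ne.symm hfc)
    have hm2 : d ∈ Lbc := hEq ▸ mdLcd
    rw [hLbc] at hm2
    simp only [Finset.mem_insert, Finset.mem_singleton] at hm2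
    rcases hm2 with h2|h2|h2
    exacts [hbd h2.symm, hcd h2.symm, hfd h2.symm]
  have ht2g : t2 = g := by
    have h1 : t2 ∈ ({a, b, d, c, e, f, g} : Finset (Fin 8)) := hCov7 ▸ ht2C
    simp only [Finset.mem_insert, Finset.mem_singleton] at h1
    rcases h1 with h|h|h|h|h|h|h
    exacts [absurd h ht2a, absurd h ht2b, absurd h ht2d, absurd h ht2c, absurd h ht2e,
      absurd h ht2f, h]
  rw [ht2g] at hLcd
  have mgLcd : g ∈ Lcd := by rw [hLcd]; simp
  -- line d e : third point is f
  obtain ⟨Lde, hLdeP, mdLde, meLde⟩ := exline hP hdC heC (Ne.symm hed)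
  obtain ⟨t3, ht3d, ht3e, hLde⟩ := third_point hP hLdeP mdLde meLde (Ne.symm hed)
  have mt3Lde : t3 ∈ Lde := by rw [hLde]; simp
  have ht3C : t3 ∈ Cov P := mem_Cov hP hLdeP mt3Lde
  have ht3a : t3 ≠ a := by
    intro h
    have hm : a ∈ Lde := h ▸ mt3Lde
    have hEq : Lde = Lac := uniq_line hP hLdeP hLacP hm meLde maLac meLac (Ne.symm hea)
    have hm2 : d ∈ Lac := hEq ▸ mdLde
    rw [hLac] at hm2
    simp only [Finset.mem_insert, Finset.mem_singleton] at hm2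
    rcases hm2 with h2|h2|h2
    exacts [had h2.symm, hcd h2.symm, hed h2.symm]
  have ht3b : t3 ≠ b := by
    intro h
    have hm : b ∈ Lde := h ▸ mt3Lde
    have hEq : Lde = L1 := uniq_line hP hLdeP hL1P hm mdLde mbL1 mdL1 hbd
    have hm2 : e ∈ L1 := hEq ▸ meLde
    rw [hL1] at hm2
    simp only [Finset.mem_insert, Finset.mem_singleton] at hm2
    rcases hm2 with h2|h2|h2
    exacts [hea h2, heb h2, hed h2]
  have ht3c : t3 ≠ c := by
    intro h
    have hm : c ∈ Lde := h ▸ mt3Lde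
    have hEq : Lde = Lac := uniq_line hP hLdeP hLacP hm meLde mcLac meLac (Ne.symm hec)
    have hm2 : d ∈ Lac := hEq ▸ mdLde
    rw [hLac] at hm2
    simp only [Finset.mem_insert, Finset.mem_singleton] at hm2
    rcases hm2 with h2|h2|h2
    exacts [had h2.symm, hcd h2.symm, hed h2.symm]
  have ht3g : t3 ≠ g := by
    intro h
    have hm : g ∈ Lde := h ▸ mt3Lde
    have hEq : Lde = Lcd := uniq_line hP hLdeP hLcdP mdLde hm mdLcd mgLcd (Ne.symm hgd)
    have hm2 : e ∈ Lcd := hEq ▸ meLde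
    rw [hLcd] at hm2
    simp only [Finset.mem_insert, Finset.mem_singleton] at hm2
    rcases hm2 with h2|h2|h2
    exacts [hec h2, hed h2, hge h2.symm]
  have ht3f : t3 = f := by
    have h1 : t3 ∈ ({a, b, d, c, e, f, g} : Finset (Fin 8)) := hCov7 ▸ ht3C
    simp only [Finset.mem_insert, Finset.mem_singleton] at h1
    rcases h1 with h|h|h|h|h|h|h
    exacts [absurd h ht3a, absurd h ht3b, absurd h ht3d, absurd h ht3c, absurd h ht3e,
      h, absurd h ht3g]
  rw [ht3f] at hLde
  -- the permutation
  have hnd : ([a, b, d, c, e, f, g, z] : List (Fin 8)).Nodup := by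
    simp only [List.nodup_cons, List.mem_cons, List.mem_singleton, List.not_mem_nil,
      or_false, List.nodup_nil, and_true, not_or]
    exact ⟨⟨hab, had, Ne.symm hca, Ne.symm hea, Ne.symm hfa, Ne.symm hga, Ne.symm hza⟩,
      ⟨hbd, Ne.symm hcb, Ne.symm heb, Ne.symm hfb, Ne.symm hgb, Ne.symm hzb⟩,
      ⟨Ne.symm hcd, Ne.symm hed, Ne.symm hfd, Ne.symm hgd, Ne.symm hzd⟩,
      ⟨Ne.symm hec, Ne.symm hfc, Ne.symm hgc, Ne.symm hzc⟩,
      ⟨Ne.symm hfe, Ne.symm hge, Ne.symm hze⟩,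
      ⟨Ne.symm hgf, Ne.symm hzf⟩, ⟨Ne.symm hzg, not_false⟩⟩
  have hofn : List.ofFn (![a, b, d, c, e, f, g, z] : Fin 8 → Fin 8) = [a, b, d, c, e, f, g, z] := by
    simp [List.ofFn_succ, Matrix.cons_val_zero, Matrix.cons_val_succ]
  have hinj : Function.Injective (![a, b, d, c, e, f, g, z] : Fin 8 → Fin 8) := by
    rw [← List.nodup_ofFn, hofn]
    exact hnd
  have hbij := Finite.injective_iff_bijective.mp hinj
  refine ⟨Equiv.ofBijective _ hbij, ?_⟩
  refine Finset.eq_of_subset_of_card_le ?_ ?_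
  · intro A hA
    rw [Finset.mem_smul_finset] at hA
    obtain ⟨B, hB, rfl⟩ := hA
    have hsimp : ∀ (x y w : Fin 8),
        (Equiv.ofBijective _ hbij) • ({x, y, w} : Finset (Fin 8)) =
        {(![a, b, d, c, e, f, g, z]) x, (![a, b, d, c, e, f, g, z]) y,
          (![a, b, d, c, e, f, g, z]) w} := by
      intro x y w
      rw [Finset.smul_finset_insert, Finset.smul_finset_insert, Finset.smul_finset_singleton]
      rfl
    rw [show P0 = ({{0,1,2},{0,3,4},{1,3,5},{2,3,6},{0,5,6},{1,4,6},{2,4,5}} :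
      Finset (Finset (Fin 8))) from rfl] at hB
    simp only [Finset.mem_insert, Finset.mem_singleton] at hB
    rcases hB with rfl|rfl|rfl|rfl|rfl|rfl|rfl
    · rw [hsimp]; show ({a, b, d} : Finset (Fin 8)) ∈ P; rw [← hL1]; exact hL1P
    · rw [hsimp]; show ({a, c, e} : Finset (Fin 8)) ∈ P; rw [← hLac]; exact hLacP
    · rw [hsimp]; show ({b, c, f} : Finset (Fin 8)) ∈ P; rw [← hLbc]; exact hLbcP
    · rw [hsimp]; show ({d, c, g} : Finset (Fin 8)) ∈ P
      rw [Finset.insert_comm, ← hLcd]; exact hLcdP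
    · rw [hsimp]; show ({a, f, g} : Finset (Fin 8)) ∈ P; rw [← hLaf]; exact hLafP
    · rw [hsimp]; show ({b, e, g} : Finset (Fin 8)) ∈ P; rw [← hLbe]; exact hLbeP
    · rw [hsimp]; show ({d, e, f} : Finset (Fin 8)) ∈ P; rw [← hLde]; exact hLdeP
  · rw [Finset.card_smul_finset, hP.1]
    decide

noncomputable def PhiRes : Matrix.GeneralLinearGroup (Fin 3) (ZMod 2) →*
    MulAction.stabilizer (Equiv.Perm (Fin 8)) P0 :=
  Phi.codRestrict _ (fun g => MulAction.mem_stabilizer_iff.mpr (Phi_smul g))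

lemma PhiRes_bij : Function.Bijective PhiRes := by
  constructor
  · intro a b h
    exact Phi_inj (Subtype.ext_iff.mp h)
  · rintro ⟨σ, hσ⟩
    obtain ⟨g, hg⟩ := Phi_surj_on_stab σ (MulAction.mem_stabilizer_iff.mp hσ)
    exact ⟨g, Subtype.ext hg⟩

noncomputable def stabIso0 : Matrix.GeneralLinearGroup (Fin 3) (ZMod 2) ≃*
    MulAction.stabilizer (Equiv.Perm (Fin 8)) P0 :=
  MulEquiv.ofBijective PhiRes PhiRes_bij

lemma card_GL168 : Nat.card (Matrix.GeneralLinearGroup (Fin 3) (ZMod 2)) = 168 := by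
  rw [Matrix.card_GL_field]
  rw [show Fintype.card (ZMod 2) = 2 from ZMod.card 2]
  decide

lemma sign_stab0 (σ : Equiv.Perm (Fin 8)) (hσ : σ • P0 = P0) : Equiv.Perm.sign σ = 1 := by
  obtain ⟨g, hg⟩ := Phi_surj_on_stab σ hσ
  rw [← hg]
  exact sign_Phi g

lemma sign_eq_pow_len (w : Equiv.Perm (Fin 8)) :
    Equiv.Perm.sign w = (-1 : ℤˣ) ^ len w := by
  have h1 : Equiv.Perm.sign w = Equiv.Perm.signAux w := by
    refine Equiv.Perm.swap_induction_on w ?_ ?_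
    · rw [_root_.map_one, Equiv.Perm.signAux_one]
    · intro f x y hxy ih
      rw [_root_.map_mul, Equiv.Perm.signAux_mul, ih, Equiv.Perm.sign_swap hxy,
        Equiv.Perm.signAux_swap hxy]
  rw [h1]
  show (∏ x ∈ Equiv.Perm.finPairsLT 8, if w x.1 ≤ w x.2 then (-1 : ℤˣ) else 1) = _
  rw [Finset.prod_ite, Finset.prod_const, Finset.prod_const, one_pow, mul_one]
  congr 1
  refine Finset.card_bij (fun x _ => (x.2, x.1)) ?_ ?_ ?_
  · intro a ha
    rw [Finset.mem_filter] at ha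
    have h2 := Equiv.Perm.mem_finPairsLT.mp ha.1
    rw [Finset.mem_filter]
    refine ⟨Finset.mem_univ _, h2, lt_of_le_of_ne ha.2 ?_⟩
    intro heq
    exact absurd (w.injective heq) (ne_of_gt h2)
  · intro a ha b hb hab
    rw [Prod.mk.injEq] at hab
    exact Sigma.ext hab.2 (heq_of_eq hab.1)
  · intro p hp
    rw [Finset.mem_filter] at hp
    refine ⟨⟨p.2, p.1⟩, ?_, rfl⟩
    rw [Finset.mem_filter]
    exact ⟨Equiv.Perm.mem_finPairsLT.mpr hp.2.1, le_of_lt hp.2.2⟩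

lemma pow_neg_one_mod2 {m n : ℕ} (h : m % 2 = n % 2) : ((-1 : ℤˣ)) ^ m = (-1) ^ n := by
  conv_lhs => rw [← Nat.div_add_mod m 2]
  conv_rhs => rw [← Nat.div_add_mod n 2]
  rw [pow_add, pow_add, pow_mul, pow_mul, h]
  norm_num

/-- all permutations carrying x0 to y have the same sign -/
lemma sign_const {x0 y : Finset (Finset (Fin 8))} (g0 gy : Equiv.Perm (Fin 8))
    (hg0 : g0 • P0 = x0) (hgy : gy • P0 = y) (w : Equiv.Perm (Fin 8)) (hw : w • x0 = y) :
    Equiv.Perm.sign w = Equiv.Perm.sign (gy * g0⁻¹) := by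
  have hτ : (gy⁻¹ * w * g0) • P0 = P0 := by
    rw [mul_smul, mul_smul, hg0, hw, ← hgy, inv_smul_smul]
  have h1 : Equiv.Perm.sign (gy⁻¹ * w * g0) = 1 := sign_stab0 _ hτ
  have h2 : w = gy * (gy⁻¹ * w * g0) * g0⁻¹ := by group
  rw [h2, _root_.map_mul, _root_.map_mul, h1, mul_one, ← _root_.map_mul]

lemma ht_pow {x0 y : Finset (Finset (Fin 8))} (g0 gy : Equiv.Perm (Fin 8))
    (hg0 : g0 • P0 = x0) (hgy : gy • P0 = y) :
    ((-1 : ℤˣ)) ^ htP x0 y = Equiv.Perm.sign (gy * g0⁻¹) := by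
  have hne : {k | ∃ w : Equiv.Perm (Fin 8), w • x0 = y ∧ len w = k}.Nonempty := by
    refine ⟨len (gy * g0⁻¹), gy * g0⁻¹, ?_, rfl⟩
    rw [mul_smul, inv_smul_eq_iff.mpr hg0.symm, hgy]
  obtain ⟨w, hw, hlen⟩ := Nat.sInf_mem hne
  rw [htP, ← hlen, ← sign_eq_pow_len]
  exact sign_const g0 gy hg0 hgy w hw

end PackingAux

open PackingAux in
/-- The stabilizer in S_8 of a packing is isomorphic to the simple group GL(3,2) of
order 168 and consists of even permutations; consequently applying any transposition
to a packing changes the parity of ht. -/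
theorem packing_stabilizer :
    (∀ P : Finset (Finset (Fin 8)), IsPacking7 P →
      Nonempty ((MulAction.stabilizer (Equiv.Perm (Fin 8)) P) ≃*
        Matrix.GeneralLinearGroup (Fin 3) (ZMod 2)) ∧
      Nat.card (MulAction.stabilizer (Equiv.Perm (Fin 8)) P) = 168 ∧
      ∀ σ ∈ MulAction.stabilizer (Equiv.Perm (Fin 8)) P, Equiv.Perm.sign σ = 1) ∧
    (∀ x0 x : Finset (Finset (Fin 8)), IsPacking7 x0 → IsPacking7 x →
      ∀ t : Equiv.Perm (Fin 8), t.IsSwap → htP x0 (t • x) % 2 ≠ htP x0 x % 2) := by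
  constructor
  · intro P hP
    obtain ⟨g, hg⟩ := exists_smul_eq hP
    have hmap : MulAction.stabilizer (Equiv.Perm (Fin 8)) P =
        (MulAction.stabilizer (Equiv.Perm (Fin 8)) P0).map (MulAut.conj g).toMonoidHom := by
      rw [← hg, MulAction.stabilizer_smul_eq_stabilizer_map_conj]
    have e1 := MulEquiv.subgroupCongr hmap
    have e2 := Subgroup.equivMapOfInjective (MulAction.stabilizer (Equiv.Perm (Fin 8)) P0)
      (MulAut.conj g).toMonoidHom (MulAut.conj g).injective
    have iso : (MulAction.stabilizer (Equiv.Perm (Fin 8)) P) ≃*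
        Matrix.GeneralLinearGroup (Fin 3) (ZMod 2) :=
      (e1.trans e2.symm).trans stabIso0.symm
    refine ⟨⟨iso⟩, ?_, ?_⟩
    · rw [Nat.card_congr iso.toEquiv, card_GL168]
    · intro σ hσ
      have hσP : σ • P = P := MulAction.mem_stabilizer_iff.mp hσ
      have hτ : (g⁻¹ * σ * g) • P0 = P0 := by
        rw [mul_smul, mul_smul, hg, hσP, ← hg, inv_smul_smul]
      have h1 : Equiv.Perm.sign (g⁻¹ * σ * g) = 1 := sign_stab0 _ hτ
      have h2 : σ = g * (g⁻¹ * σ * g) * g⁻¹ := by group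
      rw [h2, map_mul, map_mul, h1, mul_one, ← map_mul, mul_inv_cancel, map_one]
  · intro x0 x hx0 hx t ht
    obtain ⟨g0, hg0⟩ := exists_smul_eq hx0
    obtain ⟨gx, hgx⟩ := exists_smul_eq hx
    have h1 : ((-1 : ℤˣ)) ^ htP x0 x = Equiv.Perm.sign (gx * g0⁻¹) := ht_pow g0 gx hg0 hgx
    have h2 : ((-1 : ℤˣ)) ^ htP x0 (t • x) = Equiv.Perm.sign (t * gx * g0⁻¹) := by
      refine ht_pow g0 (t * gx) hg0 ?_
      rw [mul_smul, hgx]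
    intro hmod
    have h3 : ((-1 : ℤˣ)) ^ htP x0 (t • x) = ((-1 : ℤˣ)) ^ htP x0 x := pow_neg_one_mod2 hmod
    rw [h1, h2] at h3
    rw [mul_assoc, map_mul, ht.sign_eq] at h3
    rcases Int.units_eq_one_or (Equiv.Perm.sign (gx * g0⁻¹)) with hs | hs <;> rw [hs] at h3 <;>
      exact absurd h3 (by decide)
end
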